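/- arXiv:1204.1687 — 2 statements merged into one kernel-verified Lean document; each statement's English description precedes it below -/
import Mathlib

section
/- For every d ≥ 1 there exists a real multisequence β = (β_{ij})_{i+j ≤ 2d} such that: M_d(β) is positive semidefinite and its column relations are generated entirely by relations X^d = p(X,Y) and Y^d = q(X,Y) (p, q of degree ≤ d−1) via recursiveness and linearity; M_d(β) admits successive positive semidefinite, recursively generated moment matrix extensions M_{d+1}, …, M_{2d−1}, each of which again has all of its column relations generated entirely by two such relations via recursiveness and linearity; and rank M_{d+k} = rank M_{d+k−1} + (d − k − 1) for 1 ≤ k ≤ d − 1, so that the first flat extension in this sequence occurs at M_{2d−1} (rank M_{2d−1} = rank M_{2d−2}, while rank M_{d+k} > rank M_{d+k−1} for 1 ≤ k ≤ d − 2). -/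
/-!
The multisequence is that of the uniform measure on the grid `{0, …, d-1}²`, and every
extension is the same sequence read to higher degree. Its moment matrix of order `D` factors as
`EᵀE`, with `E` the evaluation matrix at the grid points; so it is positive semidefinite,
recursively generated, and its kernel consists of the polynomials of degree `≤ D` vanishing on
the grid. With `f(t) = t (t - 1) ⋯ (t - d + 1)`, the polynomials `f(x)` and `f(y)` form a Gröbner
basis of that vanishing ideal: modulo the multiples `xⁱ yʲ f(x)` and `xᵏ yˡ f(y)` of degree `≤ D`
every monomial reduces to standard monomials `xᵃ yᵇ` with `a, b < d`, and these are independent on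
the grid (a Kronecker product of Vandermonde matrices). So `rank M_D` counts the standard
monomials of degree `≤ D`, and passing from `D - 1` to `D ≥ d` adds the `2d - 1 - D` of degree `D`.
-/

open Finset Matrix

noncomputable section

/-- Monomial indices of degree at most `d` (the monomial `x^i y^j` is the pair `(i,j)`). -/
abbrev Idx (d : ℕ) : Type := {ij : ℕ × ℕ // ij.1 + ij.2 ≤ d}

/-- Monomial indices of degree exactly `e`. -/
abbrev Jdx (e : ℕ) : Type := {ij : ℕ × ℕ // ij.1 + ij.2 = e}

instance (d : ℕ) : Fintype (Idx d) :=
  Fintype.subtype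
    ((Finset.range (d + 1) ×ˢ Finset.range (d + 1)).filter fun ij => ij.1 + ij.2 ≤ d)
    (by
      rintro ⟨a, b⟩
      simp only [Finset.mem_filter, Finset.mem_product, Finset.mem_range]
      omega)

instance (e : ℕ) : Fintype (Jdx e) :=
  Fintype.subtype
    ((Finset.range (e + 1) ×ˢ Finset.range (e + 1)).filter fun ij => ij.1 + ij.2 = e)
    (by
      rintro ⟨a, b⟩
      simp only [Finset.mem_filter, Finset.mem_product, Finset.mem_range]
      omega)

/-- The moment matrix `M_d(β)`: rows and columns are indexed by monomials of degree ≤ d,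
with entry in row `(i,j)`, column `(k,l)` equal to `β (i+k) (j+l)`. -/
def momentMatrix (d : ℕ) (β : ℕ → ℕ → ℝ) : Matrix (Idx d) (Idx d) ℝ :=
  Matrix.of fun r c => β (r.1.1 + c.1.1) (r.1.2 + c.1.2)

/-- The coefficient vector (truncated to degree ≤ d) of the polynomial with
coefficient function `a`. -/
def coeffVec (d : ℕ) (a : ℕ → ℕ → ℝ) : Idx d → ℝ := fun c => a c.1.1 c.1.2

/-- `p(X,Y)`: the linear combination of the columns of `M_d(β)` given by the
coefficient function `a` of `p`. -/
def polyCol (d : ℕ) (β : ℕ → ℕ → ℝ) (a : ℕ → ℕ → ℝ) : Idx d → ℝ :=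
  momentMatrix d β *ᵥ coeffVec d a

/-- Coefficient function of the monomial `x^u y^v`. -/
def monoC (u v : ℕ) : ℕ → ℕ → ℝ := fun k l => if k = u ∧ l = v then 1 else 0

/-- Coefficient function of `x^u y^v * p`, where `p` has coefficient function `a`. -/
def shiftC (u v : ℕ) (a : ℕ → ℕ → ℝ) : ℕ → ℕ → ℝ :=
  fun k l => if u ≤ k ∧ v ≤ l then a (k - u) (l - v) else 0

/-- The polynomial with coefficient function `a` has (total) degree at most `D`. -/
def DegLE (a : ℕ → ℕ → ℝ) (D : ℕ) : Prop := ∀ k l : ℕ, D < k + l → a k l = 0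

/-- Coefficient function of the product of two polynomials. -/
def cMul (a b : ℕ → ℕ → ℝ) : ℕ → ℕ → ℝ := fun k l =>
  ∑ i ∈ Finset.range (k + 1), ∑ j ∈ Finset.range (l + 1), a i j * b (k - i) (l - j)

/-- `M_d(β)` is recursively generated: whenever `p, q, pq` all have degree ≤ d and
`p(X,Y) = 0`, also `(pq)(X,Y) = 0`. -/
def RecursivelyGenerated (d : ℕ) (β : ℕ → ℕ → ℝ) : Prop :=
  ∀ a b : ℕ → ℕ → ℝ, DegLE a d → DegLE b d → DegLE (cMul a b) d →
    polyCol d β a = 0 → polyCol d β (cMul a b) = 0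

/-- The column relations of `M_d(β)` are generated entirely by `X^n = p(X,Y)` and
`Y^m = q(X,Y)` via recursiveness and linearity. -/
def GeneratedBy (d n m : ℕ) (β p q : ℕ → ℕ → ℝ) : Prop :=
  1 ≤ n ∧ n ≤ d ∧ 1 ≤ m ∧ m ≤ d ∧
  DegLE p (n - 1) ∧ DegLE q m ∧ q 0 m = 0 ∧
  polyCol d β (monoC n 0 - p) = 0 ∧
  polyCol d β (monoC 0 m - q) = 0 ∧
  ∀ v : Idx d → ℝ,
    momentMatrix d β *ᵥ v = 0 ↔
      v ∈ Submodule.span ℝ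
        {w : Idx d → ℝ |
          (∃ i j : ℕ, n + i + j ≤ d ∧ w = coeffVec d (shiftC i j (monoC n 0 - p))) ∨
          (∃ k l : ℕ, m + k + l ≤ d ∧ w = coeffVec d (shiftC k l (monoC 0 m - q)))}

namespace LinearMap

open Module Submodule

variable {K V W ι : Type*} [Field K] [AddCommGroup V] [Module K V] [AddCommGroup W] [Module K W]
  [Fintype ι] {E : V →ₗ[K] W} {R : Submodule K V} {b : ι → V}

lemma ker_eq_of_sup_span_eq_top (hR : R ≤ ker E) (hspan : R ⊔ span K (Set.range b) = ⊤)
    (hli : LinearIndependent K (E ∘ b)) : ker E = R := by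
  refine le_antisymm (fun w hw => ?_) hR
  obtain ⟨r, hr, s, hs, rfl⟩ := mem_sup.1 (hspan ▸ mem_top : w ∈ R ⊔ span K (Set.range b))
  obtain ⟨c, rfl⟩ := mem_span_range_iff_exists_fun K |>.1 hs
  have hc : ∑ i, c i • (E ∘ b) i = 0 := by
    simpa [mem_ker.1 (hR hr)] using mem_ker.1 hw
  simpa [Fintype.linearIndependent_iff.1 hli c hc] using hr

lemma finrank_range_eq_card_of_sup_span_eq_top (hR : R ≤ ker E)
    (hspan : R ⊔ span K (Set.range b) = ⊤) (hli : LinearIndependent K (E ∘ b)) :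
    finrank K (range E) = Fintype.card ι := by
  have hrange : range E = span K (Set.range (E ∘ b)) := by
    rw [range_eq_map, ← hspan, Submodule.map_sup, map_span, Set.range_comp,
      le_ker_iff_map.1 hR, bot_sup_eq]
  rw [hrange, finrank_span_eq_card hli]

end LinearMap

open Polynomial
open scoped Polynomial.Bivariate

lemma DegLE.mono {a : ℕ → ℕ → ℝ} {D E : ℕ} (h : DegLE a D) (hDE : D ≤ E) : DegLE a E :=
  fun k l hkl => h k l (by omega)

lemma shiftC_zero_zero (a : ℕ → ℕ → ℝ) : shiftC 0 0 a = a := by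
  funext k l
  simp [shiftC]

section Bivariate

def toBivariate {D : ℕ} (v : Idx D → ℝ) : ℝ[X][Y] :=
  ∑ c : Idx D, monomial c.1.2 (monomial c.1.1 (v c))

lemma evalEval_toBivariate {D : ℕ} (v : Idx D → ℝ) (x y : ℝ) :
    (toBivariate v).evalEval x y = ∑ c : Idx D, v c * x ^ c.1.1 * y ^ c.1.2 := by
  simp [toBivariate, evalEval_finsetSum, evalEval, eval_monomial]

lemma coeff_coeff_toBivariate {D : ℕ} {a : ℕ → ℕ → ℝ} (ha : DegLE a D) (k l : ℕ) :
    ((toBivariate (coeffVec D a)).coeff l).coeff k = a k l := by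
  have hterm : ∀ c : Idx D,
      ((monomial c.1.2 (monomial c.1.1 (a c.1.1 c.1.2)) : ℝ[X][Y]).coeff l).coeff k
        = if c.1 = (k, l) then a k l else 0 := by
    rintro ⟨⟨i, j⟩, _⟩
    simp only [coeff_monomial, Prod.mk.injEq]
    split_ifs <;> simp_all [coeff_monomial]
  simp only [toBivariate, coeffVec, finsetSum_coeff, hterm]
  by_cases hkl : k + l ≤ D
  · rw [Finset.sum_eq_single_of_mem (⟨(k, l), hkl⟩ : Idx D) (mem_univ _) fun c _ hc =>
      if_neg fun h => hc (Subtype.ext h), if_pos rfl]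
  · rw [ha k l (by omega)]
    refine Finset.sum_eq_zero fun c _ => ite_eq_right_iff.2 fun h => ?_
    have := c.2
    simp_all

lemma toBivariate_coeffVec_eq {D : ℕ} {a : ℕ → ℕ → ℝ} (ha : DegLE a D) {P : ℝ[X][Y]}
    (hP : ∀ k l, (P.coeff l).coeff k = a k l) : toBivariate (coeffVec D a) = P := by
  ext l k
  rw [coeff_coeff_toBivariate ha, hP]

lemma toBivariate_coeffVec_cMul {D : ℕ} {a b : ℕ → ℕ → ℝ} (ha : DegLE a D) (hb : DegLE b D)
    (hab : DegLE (cMul a b) D) :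
    toBivariate (coeffVec D (cMul a b))
      = toBivariate (coeffVec D a) * toBivariate (coeffVec D b) := by
  refine toBivariate_coeffVec_eq hab fun k l => ?_
  simp only [coeff_mul, finsetSum_coeff, coeff_coeff_toBivariate ha, coeff_coeff_toBivariate hb,
    Nat.sum_antidiagonal_eq_sum_range_succ_mk, cMul]
  exact Finset.sum_comm

end Bivariate

section Atomic

variable {ι : Type*} (P : ι → ℝ × ℝ)

def evalMatrix (D : ℕ) : Matrix ι (Idx D) ℝ :=
  Matrix.of fun i c => (P i).1 ^ c.1.1 * (P i).2 ^ c.1.2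

lemma evalMatrix_mulVec {D : ℕ} (w : Idx D → ℝ) (i : ι) :
    (evalMatrix P D *ᵥ w) i = (toBivariate w).evalEval (P i).1 (P i).2 := by
  rw [evalEval_toBivariate]
  exact Finset.sum_congr rfl fun c _ => by simp only [evalMatrix, of_apply]; ring

variable [Fintype ι]

def atomicMoments : ℕ → ℕ → ℝ := fun a b => ∑ i, (P i).1 ^ a * (P i).2 ^ b

lemma momentMatrix_atomicMoments (D : ℕ) :
    momentMatrix D (atomicMoments P) = (evalMatrix P D)ᵀ * evalMatrix P D := by
  ext r c
  simp only [momentMatrix, atomicMoments, evalMatrix, of_apply, mul_apply, transpose_apply]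
  exact Finset.sum_congr rfl fun i _ => by ring

lemma posSemidef_momentMatrix_atomicMoments (D : ℕ) :
    (momentMatrix D (atomicMoments P)).PosSemidef := by
  simpa [momentMatrix_atomicMoments] using posSemidef_conjTranspose_mul_self (evalMatrix P D)

lemma momentMatrix_mulVec_eq_zero_iff (D : ℕ) (w : Idx D → ℝ) :
    momentMatrix D (atomicMoments P) *ᵥ w = 0 ↔ evalMatrix P D *ᵥ w = 0 := by
  rw [momentMatrix_atomicMoments]
  simpa only [LinearMap.mem_ker, mulVecLin_apply] using
    SetLike.ext_iff.1 (ker_mulVecLin_transpose_mul_self (evalMatrix P D)) w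

lemma rank_momentMatrix_atomicMoments (D : ℕ) :
    (momentMatrix D (atomicMoments P)).rank = (evalMatrix P D).rank := by
  rw [momentMatrix_atomicMoments, rank_transpose_mul_self]

lemma recursivelyGenerated_atomicMoments (D : ℕ) :
    RecursivelyGenerated D (atomicMoments P) := by
  intro a b ha hb hab hzero
  rw [polyCol, momentMatrix_mulVec_eq_zero_iff] at hzero ⊢
  funext i
  have hi := congrFun hzero i
  rw [Pi.zero_apply, evalMatrix_mulVec] at hi ⊢
  rw [toBivariate_coeffVec_cMul ha hb hab, evalEval_mul, hi, zero_mul]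

end Atomic

section Relations

def xCoeff (f : ℝ[X]) : ℕ → ℕ → ℝ := fun k l => if l = 0 then f.coeff k else 0

def yCoeff (f : ℝ[X]) : ℕ → ℕ → ℝ := fun k l => if k = 0 then f.coeff l else 0

lemma degLE_monoC_sub_xCoeff {f : ℝ[X]} (hf : f.Monic) {n : ℕ} (hn : f.natDegree = n) :
    DegLE (monoC n 0 - xCoeff f) (n - 1) := by
  intro k l hkl
  simp only [Pi.sub_apply, monoC, xCoeff]
  by_cases hl : l = 0
  · by_cases hk : k = n
    · simp [hl, hk, ← hn, hf.coeff_natDegree]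
    · simp [hl, hk, coeff_eq_zero_of_natDegree_lt (show f.natDegree < k by omega)]
  · simp [hl]

lemma degLE_monoC_sub_yCoeff {f : ℝ[X]} (hf : f.Monic) {n : ℕ} (hn : f.natDegree = n) :
    DegLE (monoC 0 n - yCoeff f) (n - 1) := by
  intro k l hkl
  simp only [Pi.sub_apply, monoC, yCoeff]
  by_cases hk : k = 0
  · by_cases hl : l = n
    · simp [hl, hk, ← hn, hf.coeff_natDegree]
    · simp [hl, hk, coeff_eq_zero_of_natDegree_lt (show f.natDegree < l by omega)]
  · simp [hk]

variable (f : ℝ[X]) (i j : ℕ)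

lemma shiftC_xCoeff_apply (k l : ℕ) :
    shiftC i j (xCoeff f) k l = if l = j ∧ i ≤ k then f.coeff (k - i) else 0 := by
  simp only [shiftC, xCoeff]
  split_ifs <;> first | rfl | omega

lemma shiftC_yCoeff_apply (k l : ℕ) :
    shiftC i j (yCoeff f) k l = if k = i ∧ j ≤ l then f.coeff (l - j) else 0 := by
  simp only [shiftC, yCoeff]
  split_ifs <;> first | rfl | omega

lemma degLE_shiftC_xCoeff : DegLE (shiftC i j (xCoeff f)) (f.natDegree + i + j) := by
  intro k l hkl
  rw [shiftC_xCoeff_apply]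
  split_ifs
  · exact coeff_eq_zero_of_natDegree_lt (by omega)
  · rfl

lemma degLE_shiftC_yCoeff : DegLE (shiftC i j (yCoeff f)) (f.natDegree + i + j) := by
  intro k l hkl
  rw [shiftC_yCoeff_apply]
  split_ifs
  · exact coeff_eq_zero_of_natDegree_lt (by omega)
  · rfl

lemma toBivariate_shiftC_xCoeff {D : ℕ} (h : f.natDegree + i + j ≤ D) :
    toBivariate (coeffVec D (shiftC i j (xCoeff f))) = X ^ j * C (X ^ i * f) := by
  refine toBivariate_coeffVec_eq (fun k l hkl => degLE_shiftC_xCoeff f i j k l (by omega))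
    fun k l => ?_
  rw [shiftC_xCoeff_apply, coeff_X_pow_mul']
  by_cases hl : l = j
  · rw [hl, if_pos le_rfl, Nat.sub_self, coeff_C_zero, coeff_X_pow_mul']
    simp
  · rw [if_neg (show ¬(l = j ∧ i ≤ k) from fun h => hl h.1)]
    split_ifs
    · rw [coeff_C, if_neg (by omega), coeff_zero]
    · rfl

lemma toBivariate_shiftC_yCoeff {D : ℕ} (h : f.natDegree + i + j ≤ D) :
    toBivariate (coeffVec D (shiftC i j (yCoeff f))) = X ^ j * (f.map C * C (X ^ i)) := by
  refine toBivariate_coeffVec_eq (fun k l hkl => degLE_shiftC_yCoeff f i j k l (by omega))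
    fun k l => ?_
  rw [shiftC_yCoeff_apply, coeff_X_pow_mul']
  by_cases hjl : j ≤ l
  · rw [if_pos hjl, coeff_mul_C, coeff_map, coeff_C_mul, coeff_X_pow]
    by_cases hk : k = i <;> simp [hk, hjl]
  · rw [if_neg hjl, if_neg fun h => hjl h.2, coeff_zero]

end Relations

section Grid

open Lagrange Submodule

variable {n m : ℕ} (u : Fin n → ℝ) (v : Fin m → ℝ)

def gridPoints : Fin n × Fin m → ℝ × ℝ := fun st => (u st.1, v st.2)

def relationSet (D : ℕ) : Set (Idx D → ℝ) :=
  {w | (∃ i j : ℕ, n + i + j ≤ D ∧ w = coeffVec D (shiftC i j (xCoeff (nodal univ u)))) ∨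
    (∃ k l : ℕ, m + k + l ≤ D ∧ w = coeffVec D (shiftC k l (yCoeff (nodal univ v))))}

abbrev StdMonomial (n m D : ℕ) : Type := {c : Idx D // c.1.1 < n ∧ c.1.2 < m}

lemma natDegree_nodal_univ : (nodal univ u).natDegree = n := by
  rw [natDegree_nodal, card_univ, Fintype.card_fin]

lemma coeff_nodal_univ : (nodal univ u).coeff n = 1 := by
  simpa [natDegree_nodal_univ] using (nodal_monic (s := univ) (v := u)).coeff_natDegree

lemma relationSet_subset_ker (D : ℕ) :
    relationSet u v D ⊆ LinearMap.ker (evalMatrix (gridPoints u v) D).mulVecLin := by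
  rintro w (⟨i, j, h, rfl⟩ | ⟨i, j, h, rfl⟩) <;>
    rw [SetLike.mem_coe, LinearMap.mem_ker, mulVecLin_apply] <;> funext st <;>
    rw [evalMatrix_mulVec, Pi.zero_apply]
  · rw [toBivariate_shiftC_xCoeff _ _ _ (by rw [natDegree_nodal_univ]; omega)]
    simp [gridPoints, evalEval_C, eval_nodal_at_node (mem_univ st.1)]
  · rw [toBivariate_shiftC_yCoeff _ _ _ (by rw [natDegree_nodal_univ]; omega)]
    simp [gridPoints, evalEval_map_C, eval_nodal_at_node (mem_univ st.2)]

lemma exists_mem_relationSet_eq_single {D : ℕ} (c : Idx D) (hc : n ≤ c.1.1 ∨ m ≤ c.1.2) :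
    ∃ w ∈ relationSet u v D, ∀ c' : Idx D, c.1.1 + c.1.2 ≤ c'.1.1 + c'.1.2 →
      w c' = (Pi.single c 1 : Idx D → ℝ) c' := by
  have hc' := c.2
  rcases hc with hx | hy
  · refine ⟨_, Or.inl ⟨c.1.1 - n, c.1.2, by omega, rfl⟩, fun c' hdeg => ?_⟩
    rw [coeffVec, shiftC_xCoeff_apply, Pi.single_apply]
    by_cases hcc : c' = c
    · simp [hcc, Nat.sub_sub_self hx, coeff_nodal_univ]
    · rw [if_neg hcc]
      split_ifs with h
      · refine coeff_eq_zero_of_natDegree_lt ?_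
        rw [natDegree_nodal_univ]
        have : c'.1.1 ≠ c.1.1 := fun h' => hcc (Subtype.ext (Prod.ext h' h.1))
        omega
      · rfl
  · refine ⟨_, Or.inr ⟨c.1.1, c.1.2 - m, by omega, rfl⟩, fun c' hdeg => ?_⟩
    rw [coeffVec, shiftC_yCoeff_apply, Pi.single_apply]
    by_cases hcc : c' = c
    · simp [hcc, Nat.sub_sub_self hy, coeff_nodal_univ]
    · rw [if_neg hcc]
      split_ifs with h
      · refine coeff_eq_zero_of_natDegree_lt ?_
        rw [natDegree_nodal_univ]
        have : c'.1.2 ≠ c.1.2 := fun h' => hcc (Subtype.ext (Prod.ext h.1 h'))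
        omega
      · rfl

lemma span_relationSet_sup_span_stdMonomial (D : ℕ) :
    span ℝ (relationSet u v D) ⊔
      span ℝ (Set.range fun c : StdMonomial n m D => Pi.single c.1 (1 : ℝ)) = ⊤ := by
  set S := span ℝ (relationSet u v D) ⊔
    span ℝ (Set.range fun c : StdMonomial n m D => Pi.single c.1 (1 : ℝ))
  -- Induction on a strict bound `N` for the degrees in the support of `w`: a nonstandard monomial
  -- is a relation minus a vector supported in lower degrees.
  suffices h : ∀ N (w : Idx D → ℝ), (∀ c : Idx D, N ≤ c.1.1 + c.1.2 → w c = 0) → w ∈ S from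
    eq_top_iff.2 fun w _ => h (D + 1) w fun c hc => absurd c.2 (by omega)
  intro N
  induction N with
  | zero => intro w hw; simp [show w = 0 from funext fun c => hw c (Nat.zero_le _)]
  | succ N ih =>
    intro w hw
    rw [pi_eq_sum_univ' w]
    refine sum_mem fun c _ => ?_
    by_cases hwc : w c = 0
    · simp [hwc]
    refine smul_mem _ _ ?_
    have hdeg : c.1.1 + c.1.2 ≤ N := by by_contra h; exact hwc (hw c (by omega))
    by_cases hstd : c.1.1 < n ∧ c.1.2 < m
    · exact mem_sup_right (subset_span ⟨⟨c, hstd⟩, rfl⟩)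
    obtain ⟨r, hr, hlead⟩ := exists_mem_relationSet_eq_single u v c (by omega)
    have hlower : r - Pi.single c 1 ∈ S := ih _ fun c' hc' => by
      rw [Pi.sub_apply, hlead c' (by omega), sub_self]
    simpa using sub_mem (mem_sup_left (subset_span hr)) hlower

variable {u v}

lemma linearIndependent_evalMatrix_stdMonomial (hu : Function.Injective u)
    (hv : Function.Injective v) (D : ℕ) :
    LinearIndependent ℝ ((evalMatrix (gridPoints u v) D).mulVecLin ∘
      fun c : StdMonomial n m D => Pi.single c.1 (1 : ℝ)) := by
  have hunit : IsUnit (kroneckerMap (· * ·) (vandermonde u) (vandermonde v)) := by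
    rw [isUnit_iff_isUnit_det, det_kronecker, isUnit_iff_ne_zero]
    exact mul_ne_zero (pow_ne_zero _ (det_vandermonde_ne_zero_iff.2 hu))
      (pow_ne_zero _ (det_vandermonde_ne_zero_iff.2 hv))
  let node (c : StdMonomial n m D) : Fin n × Fin m := (⟨c.1.1.1, c.2.1⟩, ⟨c.1.1.2, c.2.2⟩)
  have hinj : Function.Injective node := by
    intro c c' h
    simp only [node, Prod.mk.injEq, Fin.mk.injEq] at h
    exact Subtype.ext (Subtype.ext (Prod.ext h.1 h.2))
  have hcols : (evalMatrix (gridPoints u v) D).mulVecLin ∘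
      (fun c : StdMonomial n m D => Pi.single c.1 (1 : ℝ)) =
      (kroneckerMap (· * ·) (vandermonde u) (vandermonde v)).col ∘ node := by
    funext c st
    simp [node, evalMatrix, gridPoints, vandermonde]
  rw [hcols]
  exact (linearIndependent_cols_iff_isUnit.2 hunit).comp _ hinj

theorem ker_evalMatrix_gridPoints (hu : Function.Injective u) (hv : Function.Injective v)
    (D : ℕ) :
    LinearMap.ker (evalMatrix (gridPoints u v) D).mulVecLin = span ℝ (relationSet u v D) :=
  LinearMap.ker_eq_of_sup_span_eq_top (span_le.2 (relationSet_subset_ker u v D))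
    (span_relationSet_sup_span_stdMonomial u v D)
    (linearIndependent_evalMatrix_stdMonomial hu hv D)

theorem rank_evalMatrix_gridPoints (hu : Function.Injective u) (hv : Function.Injective v)
    (D : ℕ) : (evalMatrix (gridPoints u v) D).rank = Fintype.card (StdMonomial n m D) :=
  LinearMap.finrank_range_eq_card_of_sup_span_eq_top (span_le.2 (relationSet_subset_ker u v D))
    (span_relationSet_sup_span_stdMonomial u v D)
    (linearIndependent_evalMatrix_stdMonomial hu hv D)

theorem generatedBy_gridPoints (hu : Function.Injective u) (hv : Function.Injective v)
    {D : ℕ} (hn : 1 ≤ n) (hm : 1 ≤ m) (hnD : n ≤ D) (hmD : m ≤ D) :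
    GeneratedBy D n m (atomicMoments (gridPoints u v)) (monoC n 0 - xCoeff (nodal univ u))
      (monoC 0 m - yCoeff (nodal univ v)) := by
  have hker (w : Idx D → ℝ) : momentMatrix D (atomicMoments (gridPoints u v)) *ᵥ w = 0 ↔
      w ∈ span ℝ (relationSet u v D) := by
    rw [momentMatrix_mulVec_eq_zero_iff, ← ker_evalMatrix_gridPoints hu hv, LinearMap.mem_ker,
      mulVecLin_apply]
  simp only [GeneratedBy, sub_sub_cancel]
  refine ⟨hn, hnD, hm, hmD, degLE_monoC_sub_xCoeff nodal_monic (natDegree_nodal_univ u),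
    (degLE_monoC_sub_yCoeff nodal_monic (natDegree_nodal_univ v)).mono (Nat.sub_le m 1),
    by simp [monoC, yCoeff, coeff_nodal_univ], (hker _).2 (subset_span ?_), (hker _).2 (subset_span ?_),
    hker⟩
  · exact Or.inl ⟨0, 0, by omega, by rw [shiftC_zero_zero]⟩
  · exact Or.inr ⟨0, 0, by omega, by rw [shiftC_zero_zero]⟩

end Grid

lemma card_filter_add_le_succ {n m e : ℕ} (hn : n ≤ e + 2) (hm : m ≤ e + 2) :
    #{ab ∈ range n ×ˢ range m | ab.1 + ab.2 ≤ e + 1}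
      = #{ab ∈ range n ×ˢ range m | ab.1 + ab.2 ≤ e} + (n + m - 2 - e) := by
  have hsplit : {ab ∈ range n ×ˢ range m | ab.1 + ab.2 ≤ e + 1}
      = {ab ∈ range n ×ˢ range m | ab.1 + ab.2 ≤ e} ∪
        {ab ∈ range n ×ˢ range m | ab.1 + ab.2 = e + 1} := by
    rw [← filter_or]
    exact filter_congr fun _ _ => by omega
  have hdiag : {ab ∈ range n ×ˢ range m | ab.1 + ab.2 = e + 1}
      = (Ico (e + 2 - m) n).image fun a => (a, e + 1 - a) := by
    ext ⟨a, b⟩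
    simp only [mem_filter, mem_product, mem_range, mem_image, mem_Ico, Prod.mk.injEq]
    constructor
    · rintro ⟨⟨ha, hb⟩, hab⟩
      exact ⟨a, ⟨by omega, ha⟩, rfl, by omega⟩
    · rintro ⟨a, ⟨ha, ha'⟩, rfl, rfl⟩
      omega
  rw [hsplit, card_union_of_disjoint (disjoint_filter.2 fun _ _ h => by omega), hdiag,
    card_image_of_injective _ fun a a' h => (Prod.mk.inj h).1, Nat.card_Ico]
  omega

lemma card_stdMonomial (n m D : ℕ) :
    Fintype.card (StdMonomial n m D) = #{ab ∈ range n ×ˢ range m | ab.1 + ab.2 ≤ D} := by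
  rw [Fintype.card_subtype]
  refine card_nbij (fun c => c.1) (fun c hc => ?_) (fun c _ c' _ h => Subtype.ext h)
    fun ab hab => ?_
  · simp only [coe_filter, Set.mem_ofPred_eq, mem_univ, true_and] at hc
    simp [hc.1, hc.2, c.2]
  · simp only [coe_filter, mem_product, mem_range, Set.mem_ofPred_eq] at hab
    exact ⟨⟨ab, hab.2⟩, by simp [hab.1.1, hab.1.2], rfl⟩

/-- For every `d ≥ 1` there is a multisequence `β = γ 0` of degree `2d`
with `M_d(β)` positive semidefinite and column relations generated entirely by
`X^d = p(X,Y)` and `Y^d = q(X,Y)` (with `p, q` of degree ≤ d-1), admitting successive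
positive semidefinite, recursively generated extensions `M_{d+1}, …, M_{2d-1}` (the
moment matrices of `γ 1, …, γ (d-1)`), each again with column relations generated
entirely by two such relations, and with
`rank M_{d+k} = rank M_{d+k-1} + (d - k - 1)` for `1 ≤ k ≤ d - 1`; so the first flat
extension occurs at `M_{2d-1}`. -/
theorem statement5 (d : ℕ) (hd : 1 ≤ d) :
    ∃ γ : ℕ → (ℕ → ℕ → ℝ),
      (∃ p q : ℕ → ℕ → ℝ, DegLE p (d - 1) ∧ DegLE q (d - 1) ∧
        GeneratedBy d d d (γ 0) p q) ∧
      (momentMatrix d (γ 0)).PosSemidef ∧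
      (∀ k : ℕ, k ≤ d - 1 →
        (momentMatrix (d + k) (γ k)).PosSemidef ∧
        RecursivelyGenerated (d + k) (γ k) ∧
        ∃ (n m : ℕ) (p q : ℕ → ℕ → ℝ), GeneratedBy (d + k) n m (γ k) p q) ∧
      (∀ k : ℕ, k + 1 ≤ d - 1 →
        ∀ i j : ℕ, i + j ≤ 2 * (d + k) → γ (k + 1) i j = γ k i j) ∧
      (∀ k : ℕ, 1 ≤ k → k ≤ d - 1 →
        (momentMatrix (d + k) (γ k)).rank
          = (momentMatrix (d + k - 1) (γ (k - 1))).rank + (d - k - 1)) ∧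
      (1 ≤ d - 1 →
        (momentMatrix (2 * d - 1) (γ (d - 1))).rank
          = (momentMatrix (2 * d - 2) (γ (d - 2))).rank) ∧
      (∀ k : ℕ, 1 ≤ k → k ≤ d - 2 →
        (momentMatrix (d + k - 1) (γ (k - 1))).rank
          < (momentMatrix (d + k) (γ k)).rank) := by
  set u : Fin d → ℝ := fun i => (i : ℕ)
  have hu : Function.Injective u := fun i j h => Fin.ext (Nat.cast_injective h)
  set β := atomicMoments (gridPoints u u)
  have hgen {D : ℕ} (hD : d ≤ D) := generatedBy_gridPoints hu hu hd hd hD hD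
  have hrank (D : ℕ) :
      (momentMatrix D β).rank = #{ab ∈ range d ×ˢ range d | ab.1 + ab.2 ≤ D} := by
    rw [rank_momentMatrix_atomicMoments, rank_evalMatrix_gridPoints hu hu, card_stdMonomial]
  have hstep (k : ℕ) (hk : 1 ≤ k) (hkd : k ≤ d - 1) :
      (momentMatrix (d + k) β).rank = (momentMatrix (d + k - 1) β).rank + (d - k - 1) := by
    have h := card_filter_add_le_succ (n := d) (m := d) (e := d + k - 1) (by omega) (by omega)
    rw [Nat.sub_add_cancel (by omega)] at h
    rw [hrank, hrank, h, show d + d - 2 - (d + k - 1) = d - k - 1 by omega]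
  refine ⟨fun _ => β, ⟨_, _, degLE_monoC_sub_xCoeff Lagrange.nodal_monic (natDegree_nodal_univ u),
      degLE_monoC_sub_yCoeff Lagrange.nodal_monic (natDegree_nodal_univ u), hgen le_rfl⟩,
    posSemidef_momentMatrix_atomicMoments _ d,
    fun k _ => ⟨posSemidef_momentMatrix_atomicMoments _ _, recursivelyGenerated_atomicMoments _ _,
      d, d, _, _, hgen (by omega)⟩,
    fun _ _ _ _ _ => rfl, hstep, fun hd1 => ?_, fun k hk hkd => ?_⟩
  · have h := hstep (d - 1) hd1 le_rfl
    rwa [show d + (d - 1) = 2 * d - 1 by omega, show 2 * d - 1 - 1 = 2 * d - 2 by omega,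
      show d - (d - 1) - 1 = 0 by omega, add_zero] at h
  · have := hstep k hk (by omega)
    dsimp only
    omega
end
end

section
/- Let d ≥ 1, let x_1, …, x_d be distinct reals and y_1, …, y_d be distinct reals, let G = {(x_i, y_j) : 1 ≤ i, j ≤ d} ⊂ ℝ², and let μ be a finitely atomic positive measure on ℝ² whose support is exactly G. Then M_{d−1}[μ] is positive definite (in particular, invertible). -/
/-!
Writing `V` for the matrix of values of the monomials of degree `≤ d - 1` at the grid points,
`M_{d-1}[μ] = Vᵀ diag(ρ) V`, so positive definiteness amounts to injectivity of `V`. Both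
exponents of such a monomial are `< d`, so the columns of `V` are among those of the Kronecker
product of the Vandermonde matrices of `x` and `y`, which is invertible as `x` and `y` are
injective.
-/

open Finset Matrix

noncomputable section

open MeasureTheory

/-- The moment multisequence of a measure `μ` on `ℝ²`. -/
def momentsOf (μ : Measure (ℝ × ℝ)) : ℕ → ℕ → ℝ :=
  fun i j => ∫ z : ℝ × ℝ, z.1 ^ i * z.2 ^ j ∂μ

open scoped Kronecker

def monomialEvalMatrix {ι : Type*} (n : ℕ) (p : ι → ℝ × ℝ) : Matrix ι (Idx n) ℝ :=
  Matrix.of fun i c => (p i).1 ^ c.1.1 * (p i).2 ^ c.1.2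

theorem integral_finset_sum_ofReal_smul_dirac {α ι E : Type*} [MeasurableSpace α]
    [MeasurableSingletonClass α] [NormedAddCommGroup E] [NormedSpace ℝ E] [CompleteSpace E]
    (s : Finset ι) (w : ι → ℝ) (hw : ∀ i ∈ s, 0 ≤ w i) (p : ι → α) (f : α → E) :
    ∫ z, f z ∂(∑ i ∈ s, ENNReal.ofReal (w i) • Measure.dirac (p i)) =
      ∑ i ∈ s, w i • f (p i) := by
  rw [integral_finsetSum_measure fun i _ =>
    (integrable_dirac enorm_lt_top).smul_measure ENNReal.ofReal_ne_top]
  refine Finset.sum_congr rfl fun i hi => ?_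
  rw [integral_smul_measure, integral_dirac, ENNReal.toReal_ofReal (hw i hi)]

theorem momentsOf_sum_ofReal_smul_dirac {ι : Type*} [Fintype ι] (w : ι → ℝ) (hw : 0 ≤ w)
    (p : ι → ℝ × ℝ) :
    momentsOf (∑ i, ENNReal.ofReal (w i) • Measure.dirac (p i)) =
      fun k l => ∑ i, w i * ((p i).1 ^ k * (p i).2 ^ l) := by
  funext k l
  exact integral_finset_sum_ofReal_smul_dirac _ w (fun i _ => hw i) p _

theorem momentMatrix_sum_point_moments {ι : Type*} [Fintype ι] [DecidableEq ι] (n : ℕ)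
    (w : ι → ℝ) (p : ι → ℝ × ℝ) :
    momentMatrix n (fun k l => ∑ i, w i * ((p i).1 ^ k * (p i).2 ^ l)) =
      (monomialEvalMatrix n p)ᴴ * diagonal w * monomialEvalMatrix n p := by
  ext r c
  rw [mul_apply]
  simp only [momentMatrix, monomialEvalMatrix, mul_diagonal, conjTranspose_apply, of_apply,
    star_trivial, pow_add]
  exact Finset.sum_congr rfl fun i _ => by ring

theorem isUnit_vandermonde {K : Type*} [Field K] {d : ℕ} {x : Fin d → K}
    (hx : Function.Injective x) :
    IsUnit (vandermonde x) :=
  (isUnit_iff_isUnit_det _).mpr (det_vandermonde_ne_zero_iff.mpr hx).isUnit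

theorem monomialEvalMatrix_grid_mulVec_injective {d n : ℕ} (hn : n < d) {x y : Fin d → ℝ}
    (hx : Function.Injective x) (hy : Function.Injective y) :
    Function.Injective
      (monomialEvalMatrix n fun ij : Fin d × Fin d => (x ij.1, y ij.2)).mulVec := by
  let exponents : Idx n → Fin d × Fin d :=
    fun c => (⟨c.1.1, by omega⟩, ⟨c.1.2, by omega⟩)
  have hexponents : Function.Injective exponents := fun c c' h => by
    simp only [exponents, Prod.mk.injEq, Fin.mk.injEq] at h
    exact Subtype.ext (Prod.ext h.1 h.2)
  have hcol : (monomialEvalMatrix n fun ij : Fin d × Fin d => (x ij.1, y ij.2)).col =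
      (vandermonde x ⊗ₖ vandermonde y).col ∘ exponents := by
    ext c ij
    simp [monomialEvalMatrix, exponents, vandermonde]
  rw [mulVec_injective_iff, hcol]
  exact (linearIndependent_cols_of_isUnit
    ((isUnit_vandermonde hx).kronecker (isUnit_vandermonde hy))).comp _ hexponents

/-- For the finitely atomic measure `μ` with support exactly the
`d × d` grid `{(x_i, y_j)}`, the moment matrix `M_{d-1}[μ]` is positive definite. -/
theorem statement8 (d : ℕ) (hd : 1 ≤ d) (x y : Fin d → ℝ)
    (hx : Function.Injective x) (hy : Function.Injective y)
    (ρ : Fin d → Fin d → ℝ) (hρ : ∀ i j, 0 < ρ i j)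
    (μ : Measure (ℝ × ℝ))
    (hμ : μ = ∑ i : Fin d, ∑ j : Fin d,
      ENNReal.ofReal (ρ i j) • Measure.dirac ((x i, y j) : ℝ × ℝ)) :
    (momentMatrix (d - 1) (momentsOf μ)).PosDef := by
  have hμ_grid : μ = ∑ ij : Fin d × Fin d,
      ENNReal.ofReal (ρ ij.1 ij.2) • Measure.dirac ((x ij.1, y ij.2) : ℝ × ℝ) := by
    rw [hμ, ← Fintype.sum_prod_type']
  rw [hμ_grid, momentsOf_sum_ofReal_smul_dirac (fun ij : Fin d × Fin d => ρ ij.1 ij.2)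
    (fun ij => (hρ ij.1 ij.2).le) fun ij => (x ij.1, y ij.2), momentMatrix_sum_point_moments]
  have hweights : (diagonal fun ij : Fin d × Fin d => ρ ij.1 ij.2).PosDef :=
    posDef_diagonal_iff.mpr fun ij => hρ ij.1 ij.2
  exact hweights.conjTranspose_mul_mul_same
    (monomialEvalMatrix_grid_mulVec_injective (Nat.sub_one_lt_of_lt hd) hx hy)
end
end
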